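/- arXiv:2604.03915 — 3 statements merged into one kernel-verified Lean document; each statement's English description precedes it below -/
import Mathlib

section
/- Let θ, ζ be N-tuples in (0,1)^N and let r ∈ (0,1). Then for any word v ∈ Λ_θ(r), one has (θ_min · r)^{a*} ≤ ζ_v ≤ r^{a₊}, where a₊ = min_i ln ζᵢ/ln θᵢ, a* = max_i ln ζᵢ/ln θᵢ, and θ_min = min_i θᵢ. -/
namespace SSS

/-- The weight of a finite word: the product of the tuple entries along the word. -/
def wt {N : ℕ} (θ : Fin N → ℝ) (w : List (Fin N)) : ℝ := (w.map θ).prod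

/-- The partition `Λ_θ(r)`: non-empty words `w` with `θ_w ≤ r < θ_w / θ_{w_last}`. -/
def partition {N : ℕ} (θ : Fin N → ℝ) (r : ℝ) : Set (List (Fin N)) :=
  {w | ∃ h : w ≠ [], wt θ w ≤ r ∧ r < wt θ w / θ (w.getLast h)}

/-- for `θ, ζ ∈ (0,1)^N`, `r ∈ (0,1)` and `v ∈ Λ_θ(r)`,
`(θ_min · r)^{a*} ≤ ζ_v ≤ r^{a₊}`. -/
theorem partition_weight_power_bounds {N : ℕ} (θ ζ : Fin N → ℝ)
    (hθ : ∀ i, θ i ∈ Set.Ioo (0 : ℝ) 1) (hζ : ∀ i, ζ i ∈ Set.Ioo (0 : ℝ) 1)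
    (θmin : ℝ) (hθmin : IsLeast (Set.range θ) θmin)
    (amin amax : ℝ)
    (hamin : IsLeast (Set.range fun i => Real.log (ζ i) / Real.log (θ i)) amin)
    (hamax : IsGreatest (Set.range fun i => Real.log (ζ i) / Real.log (θ i)) amax)
    (r : ℝ) (hr : r ∈ Set.Ioo (0 : ℝ) 1)
    (v : List (Fin N)) (hv : v ∈ partition θ r) :
    (θmin * r) ^ amax ≤ wt ζ v ∧ wt ζ v ≤ r ^ amin := by
  obtain ⟨hne, hle, hlt⟩ := hv
  have hθpos : ∀ i, 0 < θ i := fun i => (hθ i).1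
  have hζpos : ∀ i, 0 < ζ i := fun i => (hζ i).1
  have hwpos : ∀ (f : Fin N → ℝ), (∀ i, 0 < f i) → ∀ w : List (Fin N), 0 < wt f w := by
    intro f hf w
    induction w with
    | nil => simp [wt]
    | cons a w ih =>
      have : wt f (a :: w) = f a * wt f w := by simp [wt]
      rw [this]; exact mul_pos (hf a) ih
  have hlogθ : ∀ i, Real.log (θ i) < 0 := fun i => Real.log_neg (hθ i).1 (hθ i).2
  have hlogζ : ∀ i, Real.log (ζ i) < 0 := fun i => Real.log_neg (hζ i).1 (hζ i).2
  have hai_pos : ∀ i, 0 < Real.log (ζ i) / Real.log (θ i) :=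
    fun i => div_pos_of_neg_of_neg (hlogζ i) (hlogθ i)
  have hzeq : ∀ i, ζ i = θ i ^ (Real.log (ζ i) / Real.log (θ i)) := by
    intro i
    rw [Real.rpow_def_of_pos (hθpos i), mul_comm, div_mul_cancel₀ _ (ne_of_lt (hlogθ i)),
      Real.exp_log (hζ i).1]
  have hζ_le : ∀ i, ζ i ≤ θ i ^ amin := by
    intro i
    rw [hzeq i]
    exact Real.rpow_le_rpow_of_exponent_ge (hθpos i) (le_of_lt (hθ i).2) (hamin.2 ⟨i, rfl⟩)
  have hζ_ge : ∀ i, θ i ^ amax ≤ ζ i := by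
    intro i
    rw [hzeq i]
    exact Real.rpow_le_rpow_of_exponent_ge (hθpos i) (le_of_lt (hθ i).2) (hamax.2 ⟨i, rfl⟩)
  have haminpos : 0 < amin := by
    obtain ⟨i, hi⟩ := hamin.1; rw [← hi]; exact hai_pos i
  have hamaxpos : 0 < amax := by
    obtain ⟨i, hi⟩ := hamax.1; rw [← hi]; exact hai_pos i
  have key : ∀ w : List (Fin N), (wt θ w) ^ amax ≤ wt ζ w ∧ wt ζ w ≤ (wt θ w) ^ amin := by
    intro w
    induction w with
    | nil => simp [wt]
    | cons a w ih =>
      have h1 : wt θ (a :: w) = θ a * wt θ w := by simp [wt]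
      have h2 : wt ζ (a :: w) = ζ a * wt ζ w := by simp [wt]
      have hwθ := hwpos θ hθpos w
      have hwζ := hwpos ζ hζpos w
      rw [h1, h2, Real.mul_rpow (hθpos a).le hwθ.le, Real.mul_rpow (hθpos a).le hwθ.le]
      constructor
      · exact mul_le_mul (hζ_ge a) ih.1 (Real.rpow_nonneg hwθ.le _) (hζpos a).le
      · exact mul_le_mul (hζ_le a) ih.2 hwζ.le (Real.rpow_nonneg (hθpos a).le _)
  have hθminpos : 0 < θmin := by
    obtain ⟨i, hi⟩ := hθmin.1; rw [← hi]; exact hθpos i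
  have hwθv := hwpos θ hθpos v
  constructor
  · have hlast : θmin ≤ θ (v.getLast hne) := hθmin.2 ⟨_, rfl⟩
    have h1 : θmin * r ≤ wt θ v := by
      have h2 : r * θ (v.getLast hne) < wt θ v :=
        (lt_div_iff₀ (hθpos _)).mp hlt
      nlinarith [hr.1, hθpos (v.getLast hne)]
    calc (θmin * r) ^ amax ≤ (wt θ v) ^ amax :=
          Real.rpow_le_rpow (mul_nonneg hθminpos.le hr.1.le) h1 hamaxpos.le
      _ ≤ wt ζ v := (key v).1
  · calc wt ζ v ≤ (wt θ v) ^ amin := (key v).2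
      _ ≤ r ^ amin := Real.rpow_le_rpow hwθv.le hle haminpos.le

end SSS
end

section
/- Let (K, {Fᵢ}₁ᴺ) be a self-similar set with contraction ratio tuple θ ∈ (0,1)^N, and let ζ ∈ (0,1)^N. Suppose there exists C > 0 such that for all r ∈ (0,1) and all non-empty words v, w ∈ Λ_θ(r) with K_v ∩ K_w ≠ ∅, one has C⁻¹ζ_v ≤ ζ_w ≤ Cζ_v. Then ζ satisfies the average condition (AV_θ): there exist positive constants C', C'' such that for all non-empty finite words v, w with θ_w ≤ C'θ_v and K_v ∩ K_w ≠ ∅, one has ζ_w ≤ C''ζ_v. -/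
/-!
Take `C' = 1`. Given `v`, `w` with `θ_w ≤ θ_v` and intersecting cells, put `r = θ_v`: then `v`
itself lies in `Λ_θ(r)`, and `w` has a prefix `u` in `Λ_θ(r)`. Since `K_w ⊆ K_u`, the cells
`K_v` and `K_u` intersect, so `ζ_w ≤ ζ_u ≤ C ζ_v` by the comparability hypothesis.
-/

namespace SSS

/-- The iterated map `F_w = F_{w₁} ∘ ⋯ ∘ F_{wₙ}`. -/
def Fword {M : Type*} {N : ℕ} (F : Fin N → M → M) : List (Fin N) → M → M
  | [] => id
  | i :: w => F i ∘ Fword F w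

/-- The cell `K_w = F_w(K)`. -/
def cell {M : Type*} {N : ℕ} (F : Fin N → M → M) (K : Set M)
    (w : List (Fin N)) : Set M := Fword F w '' K

variable {N : ℕ}

section Words

variable {θ : Fin N → ℝ}

lemma wt_cons (i : Fin N) (w : List (Fin N)) :
    wt θ (i :: w) = θ i * wt θ w := by
  simp [wt]

lemma wt_append (u v : List (Fin N)) : wt θ (u ++ v) = wt θ u * wt θ v := by
  simp [wt]

lemma wt_pos (hθ : ∀ i, 0 < θ i) (w : List (Fin N)) : 0 < wt θ w :=
  List.prod_pos (by simpa using fun i _ => hθ i)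

lemma wt_lt_one (hθ : ∀ i, θ i ∈ Set.Ioo (0 : ℝ) 1) {w : List (Fin N)} (hw : w ≠ []) :
    wt θ w < 1 := by
  simpa [wt] using
    List.prod_map_lt_prod_map hw θ (fun _ => 1) (fun i _ => (hθ i).1) (fun i _ => (hθ i).2)

lemma wt_append_le_left (hθ : ∀ i, θ i ∈ Set.Icc (0 : ℝ) 1) (u v : List (Fin N)) :
    wt θ (u ++ v) ≤ wt θ u := by
  have hv : wt θ v ≤ 1 := by
    simpa [wt] using List.prod_map_le_prod_map₀ (s := v) θ (fun _ => 1)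
      (fun i _ => (hθ i).1) (fun i _ => (hθ i).2)
  have hu : 0 ≤ wt θ u := List.prod_nonneg (by simpa using fun i _ => (hθ i).1)
  rw [wt_append]
  exact mul_le_of_le_one_right hu hv

lemma mem_partition_wt_self (hθ : ∀ i, θ i ∈ Set.Ioo (0 : ℝ) 1) {v : List (Fin N)}
    (hv : v ≠ []) : v ∈ partition θ (wt θ v) := by
  refine ⟨hv, le_rfl, ?_⟩
  rw [lt_div_iff₀ (hθ _).1]
  exact mul_lt_of_lt_one_right (wt_pos (fun i => (hθ i).1) v) (hθ _).2

lemma singleton_mem_partition_iff {i : Fin N} (hi : 0 < θ i) {r : ℝ} :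
    [i] ∈ partition θ r ↔ θ i ≤ r ∧ r < 1 := by
  simp [partition, wt, div_self hi.ne']

lemma cons_mem_partition_iff {i : Fin N} (hi : 0 < θ i) {w : List (Fin N)} (hw : w ≠ [])
    {r : ℝ} : i :: w ∈ partition θ r ↔ w ∈ partition θ (r / θ i) := by
  simp only [partition, Set.mem_ofPred_eq, List.getLast_cons hw, wt_cons, mul_div_assoc,
    ← le_div_iff₀' hi, ← div_lt_iff₀' hi]
  exact ⟨fun ⟨_, h⟩ => ⟨hw, h⟩, fun ⟨_, h⟩ => ⟨List.cons_ne_nil i w, h⟩⟩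

lemma exists_prefix_mem_partition (hθ : ∀ i, 0 < θ i) {w : List (Fin N)} (hw : w ≠ [])
    {r : ℝ} (hwr : wt θ w ≤ r) (hr : r < 1) :
    ∃ u t, w = u ++ t ∧ u ∈ partition θ r := by
  induction w generalizing r with
  | nil => exact absurd rfl hw
  | cons i w ih =>
    by_cases hir : θ i ≤ r
    · exact ⟨[i], w, rfl, (singleton_mem_partition_iff (hθ i)).2 ⟨hir, hr⟩⟩
    · replace hir := not_le.mp hir
      have hw' : w ≠ [] := by
        rintro rfl
        exact hir.not_ge (by simpa [wt] using hwr)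
      rw [wt_cons, ← le_div_iff₀' (hθ i)] at hwr
      obtain ⟨u, t, rfl, hu⟩ := ih hw' hwr ((div_lt_one (hθ i)).2 hir)
      exact ⟨i :: u, t, rfl, (cons_mem_partition_iff (hθ i) hu.1).2 hu⟩

end Words

section Cells

variable {M : Type*} (F : Fin N → M → M) {K : Set M}

lemma Fword_append (u v : List (Fin N)) : Fword F (u ++ v) = Fword F u ∘ Fword F v := by
  induction u with
  | nil => rfl
  | cons i u ih => simp [Fword, ih, Function.comp_assoc]

lemma image_Fword_subset (hK : ∀ i, F i '' K ⊆ K) (w : List (Fin N)) :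
    Fword F w '' K ⊆ K := by
  induction w with
  | nil => simp [Fword]
  | cons i w ih =>
    rw [Fword, Set.image_comp]
    exact (Set.image_mono ih).trans (hK i)

lemma cell_append_subset (hK : ∀ i, F i '' K ⊆ K) (u v : List (Fin N)) :
    cell F K (u ++ v) ⊆ cell F K u := by
  rw [cell, cell, Fword_append, Set.image_comp]
  exact Set.image_mono (image_Fword_subset F hK v)

end Cells

theorem average_condition_of_partition_comparability_general
    {M : Type*} {N : ℕ}
    (F : Fin N → M → M) (θ ζ : Fin N → ℝ)
    (hθ : ∀ i, θ i ∈ Set.Ioo (0 : ℝ) 1) (hζ : ∀ i, ζ i ∈ Set.Ioo (0 : ℝ) 1)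
    (K : Set M)
    (hself : K = ⋃ i, F i '' K)
    (C : ℝ) (hC : 0 < C)
    (hcomp : ∀ r : ℝ, r ∈ Set.Ioo (0 : ℝ) 1 → ∀ v w : List (Fin N),
      v ∈ partition θ r → w ∈ partition θ r →
      (cell F K v ∩ cell F K w).Nonempty →
      C⁻¹ * wt ζ v ≤ wt ζ w ∧ wt ζ w ≤ C * wt ζ v) :
    ∃ C' > (0 : ℝ), ∃ C'' > (0 : ℝ), ∀ v w : List (Fin N), v ≠ [] → w ≠ [] →
      wt θ w ≤ C' * wt θ v → (cell F K v ∩ cell F K w).Nonempty →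
      wt ζ w ≤ C'' * wt ζ v := by
  have hK : ∀ i, F i '' K ⊆ K := fun i =>
    (Set.subset_iUnion (fun j => F j '' K) i).trans hself.ge
  refine ⟨1, one_pos, C, hC, fun v w hv hw hwv hvw => ?_⟩
  rw [one_mul] at hwv
  have hr : wt θ v ∈ Set.Ioo (0 : ℝ) 1 := ⟨wt_pos (fun i => (hθ i).1) v, wt_lt_one hθ hv⟩
  obtain ⟨u, t, rfl, hu⟩ := exists_prefix_mem_partition (fun i => (hθ i).1) hw hwv hr.2
  have hvu : (cell F K v ∩ cell F K u).Nonempty :=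
    hvw.mono (Set.inter_subset_inter_right _ (cell_append_subset F hK u t))
  calc wt ζ (u ++ t)
      ≤ wt ζ u := wt_append_le_left (fun i => Set.Ioo_subset_Icc_self (hζ i)) u t
    _ ≤ C * wt ζ v := (hcomp _ hr v u (mem_partition_wt_self hθ hv) hu hvu).2

/-- if the `ζ`-weights of intersecting cells in any common partition
`Λ_θ(r)` are comparable, then `ζ` satisfies the average condition `(AV_θ)`. -/
theorem average_condition_of_partition_comparability
    {M : Type*} [MetricSpace M] {N : ℕ}
    (F : Fin N → M → M) (θ ζ : Fin N → ℝ)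
    (hθ : ∀ i, θ i ∈ Set.Ioo (0 : ℝ) 1) (hζ : ∀ i, ζ i ∈ Set.Ioo (0 : ℝ) 1)
    (hcontr : ∀ i, ∀ x y : M, dist (F i x) (F i y) ≤ θ i * dist x y)
    (K : Set M) (hKne : K.Nonempty) (hKcomp : IsCompact K)
    (hself : K = ⋃ i, F i '' K)
    (C : ℝ) (hC : 0 < C)
    (hcomp : ∀ r : ℝ, r ∈ Set.Ioo (0 : ℝ) 1 → ∀ v w : List (Fin N),
      v ∈ partition θ r → w ∈ partition θ r →
      (cell F K v ∩ cell F K w).Nonempty →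
      C⁻¹ * wt ζ v ≤ wt ζ w ∧ wt ζ w ≤ C * wt ζ v) :
    ∃ C' > (0 : ℝ), ∃ C'' > (0 : ℝ), ∀ v w : List (Fin N), v ≠ [] → w ≠ [] →
      wt θ w ≤ C' * wt θ v → (cell F K v ∩ cell F K w).Nonempty →
      wt ζ w ≤ C'' * wt ζ v :=
  average_condition_of_partition_comparability_general F θ ζ hθ hζ K hself C hC hcomp

end SSS
end

section
/- Let (K,{Fᵢ}₁ᴺ) be a self-similar set and let (E,F) be a regular Dirichlet form on L²(K,μ) satisfying self-similarity: for every u ∈ F and each 1 ≤ i ≤ N, u∘Fᵢ ∈ F, and E(u) = Σᵢ sᵢ⁻¹ E(u∘Fᵢ) with constants sᵢ ∈ (0,1). Assume further that constants belong to F with E(1) = 0. Then (E,F) is strongly local: E(f,g) = 0 whenever f, g ∈ F have compact supports and g is constant on an open neighborhood of supp(f). -/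
/-- a self-similar Dirichlet form with ratios `sᵢ ∈ (0,1)` on a
(compact) self-similar space, whose domain contains the constants with
`E(1,1) = 0`, is strongly local: `E(f,g) = 0` whenever `f, g` are in the domain,
have compact supports, and `g` is constant on an open neighborhood of
`supp(f)`. -/
theorem self_similar_form_strongly_local
    {M : Type*} [MetricSpace M] [CompactSpace M] {N : ℕ}
    (F : Fin N → M → M) (ρ : Fin N → ℝ) (s : Fin N → ℝ)
    (hρ : ∀ i, ρ i ∈ Set.Ioo (0 : ℝ) 1) (hs : ∀ i, s i ∈ Set.Ioo (0 : ℝ) 1)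
    (hcontr : ∀ i, ∀ x y : M, dist (F i x) (F i y) ≤ ρ i * dist x y)
    (𝓕 : Set (M → ℝ)) (E : (M → ℝ) → (M → ℝ) → ℝ)
    -- `𝓕` is a linear subspace containing the constants
    (hFadd : ∀ u ∈ 𝓕, ∀ v ∈ 𝓕, u + v ∈ 𝓕)
    (hFsmul : ∀ (c : ℝ), ∀ u ∈ 𝓕, c • u ∈ 𝓕)
    (hFconst : ∀ c : ℝ, (fun _ : M => c) ∈ 𝓕)
    -- `E` is a symmetric, nonnegative bilinear form on `𝓕`
    (hsymm : ∀ u ∈ 𝓕, ∀ v ∈ 𝓕, E u v = E v u)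
    (haddl : ∀ u ∈ 𝓕, ∀ v ∈ 𝓕, ∀ w ∈ 𝓕, E (u + v) w = E u w + E v w)
    (hsmull : ∀ (c : ℝ), ∀ u ∈ 𝓕, ∀ v ∈ 𝓕, E (c • u) v = c * E u v)
    (hpos : ∀ u ∈ 𝓕, 0 ≤ E u u)
    -- constants belong to `𝓕` with `E(1) = 0`
    (hone : E (fun _ : M => (1 : ℝ)) (fun _ : M => (1 : ℝ)) = 0)
    -- self-similarity
    (hcomp : ∀ u ∈ 𝓕, ∀ i, u ∘ F i ∈ 𝓕)
    (hss : ∀ u ∈ 𝓕, ∀ v ∈ 𝓕, E u v = ∑ i, (s i)⁻¹ * E (u ∘ F i) (v ∘ F i)) :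
    ∀ f ∈ 𝓕, ∀ g ∈ 𝓕, HasCompactSupport f → HasCompactSupport g →
      (∃ c : ℝ, ∃ U : Set M, IsOpen U ∧ tsupport f ⊆ U ∧ ∀ x ∈ U, g x = c) →
      E f g = 0 := by
  intro f hf g hg hcf hcg hcU
  obtain ⟨c, U, hU, hsub, hgc⟩ := hcU
  -- E u 1 = 0 for any u ∈ 𝓕 (Cauchy-Schwarz with E 1 1 = 0)
  have h1 : (fun _ : M => (1 : ℝ)) ∈ 𝓕 := hFconst 1
  have Eone : ∀ u ∈ 𝓕, E u (fun _ : M => (1 : ℝ)) = 0 := by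
    intro u hu
    by_contra hb
    set b := E u (fun _ : M => (1 : ℝ)) with hbdef
    set t : ℝ := -(E u u + 1) / (2 * b) with htdef
    have ht1 : t • (fun _ : M => (1 : ℝ)) ∈ 𝓕 := hFsmul t _ h1
    have hv : u + t • (fun _ : M => (1 : ℝ)) ∈ 𝓕 := hFadd u hu _ ht1
    have e1 : E (u + t • fun _ : M => (1 : ℝ)) (u + t • fun _ : M => (1 : ℝ))
        = E u u + 2 * t * b + t * t * E (fun _ : M => (1 : ℝ)) (fun _ : M => (1 : ℝ)) := by
      rw [haddl u hu _ ht1 _ hv, hsmull t _ h1 _ hv,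
        hsymm u hu _ hv, hsymm _ h1 _ hv,
        haddl u hu _ ht1 u hu, haddl u hu _ ht1 _ h1,
        hsmull t _ h1 u hu, hsmull t _ h1 _ h1,
        hsymm _ h1 u hu, ← hbdef]
      ring
    rw [hone] at e1
    have hpv := hpos _ hv
    rw [e1] at hpv
    have huu := hpos u hu
    have hb2 : (2 : ℝ) * b ≠ 0 := by
      intro h; apply hb; linarith [mul_eq_zero.mp h |>.resolve_left (by norm_num)]
    have : E u u + 2 * t * b + t * t * 0 = -1 := by
      rw [htdef]; field_simp; ring
    linarith
  -- trivial case N = 0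
  by_cases hN : N = 0
  · subst hN
    rw [hss f hf g hg]; simp
  -- contraction ratio bound
  haveI : Nonempty (Fin N) := ⟨⟨0, Nat.pos_of_ne_zero hN⟩⟩
  set r : ℝ := Finset.univ.sup' Finset.univ_nonempty ρ with hrdef
  have hρr : ∀ i, ρ i ≤ r := fun i => Finset.le_sup' ρ (Finset.mem_univ i)
  have hr1 : r < 1 := by
    rw [hrdef, Finset.sup'_lt_iff]
    exact fun i _ => (hρ i).2
  have hr0 : 0 < r := lt_of_lt_of_le (hρ ⟨0, Nat.pos_of_ne_zero hN⟩).1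
    (hρr ⟨0, Nat.pos_of_ne_zero hN⟩)
  set D : ℝ := Metric.diam (Set.univ : Set M) with hDdef
  have hD : ∀ x y : M, dist x y ≤ D :=
    fun x y => Metric.dist_le_diam_of_mem isCompact_univ.isBounded trivial trivial
  have hD0 : 0 ≤ D := Metric.diam_nonneg
  -- key induction
  have L : ∀ k : ℕ, ∀ u ∈ 𝓕, ∀ v ∈ 𝓕,
      (∀ x y : M, u x ≠ 0 → dist x y ≤ r ^ k * D → v y = v x) → E u v = 0 := by
    intro k
    induction k with
    | zero =>
      intro u hu v hv h
      by_cases h0 : ∀ x, u x = 0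
      · have hu0 : u = (0 : ℝ) • v := funext fun x => by simp [h0 x]
        rw [hu0, hsmull 0 v hv v hv, zero_mul]
      · push_neg at h0
        obtain ⟨x, hx⟩ := h0
        have hgv : v = (v x) • (fun _ : M => (1 : ℝ)) := by
          funext y
          have := h x y hx (by simpa using hD x y)
          simp [this]
        calc E u v = E ((v x) • fun _ : M => (1 : ℝ)) u := by rw [← hgv, hsymm u hu v hv]
          _ = v x * E (fun _ : M => (1 : ℝ)) u := hsmull _ _ h1 u hu
          _ = v x * E u (fun _ : M => (1 : ℝ)) := by rw [hsymm _ h1 u hu]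
          _ = 0 := by rw [Eone u hu, mul_zero]
    | succ k ih =>
      intro u hu v hv h
      rw [hss u hu v hv]
      apply Finset.sum_eq_zero
      intro i _
      have hz : E (u ∘ F i) (v ∘ F i) = 0 := by
        apply ih _ (hcomp u hu i) _ (hcomp v hv i)
        intro x y hx hxy
        apply h (F i x) (F i y) hx
        calc dist (F i x) (F i y) ≤ ρ i * dist x y := hcontr i x y
          _ ≤ r * (r ^ k * D) := by
              apply mul_le_mul (hρr i) hxy dist_nonneg (le_of_lt hr0)
          _ = r ^ (k + 1) * D := by ring
      rw [hz, mul_zero]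
  -- choose thickening and scale
  obtain ⟨δ, hδ0, hth⟩ := hcf.exists_thickening_subset_open hU hsub
  obtain ⟨k, hk⟩ : ∃ k : ℕ, r ^ k < δ / (D + 1) :=
    exists_pow_lt_of_lt_one (div_pos hδ0 (by linarith)) hr1
  have hkD : r ^ k * D < δ := by
    have h1' : r ^ k * D ≤ r ^ k * (D + 1) := by
      apply mul_le_mul_of_nonneg_left (by linarith) (le_of_lt (pow_pos hr0 k))
    have h2' : r ^ k * (D + 1) < δ := by
      rw [← div_mul_cancel₀ δ (show (D + 1 : ℝ) ≠ 0 by linarith)]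
      exact mul_lt_mul_of_pos_right hk (by linarith)
    linarith
  apply L k f hf g hg
  intro x y hx hxy
  have hxs : x ∈ tsupport f := subset_tsupport f (Function.mem_support.mpr hx)
  have hyU : y ∈ U := by
    apply hth
    rw [Metric.mem_thickening_iff]
    exact ⟨x, hxs, by rw [dist_comm]; exact lt_of_le_of_lt hxy hkD⟩
  rw [hgc y hyU, hgc x (hsub hxs)]
end
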